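/- Let m = (k,1,2) with k ≥ 1 and let 𝔥_𝒫 be the m-Minkowski functional of the pentablock 𝒫. Then the boundary of 𝒫 is contained in { z ∈ ℂ³ : 𝔥_𝒫(z) = 1 }; consequently 𝔥_𝒫 is continuous on ℂ³. -/

import Mathlib

open Set Metric

/-- The symmetrized bidisc `𝔾₂ = {(z+w, zw) : z, w ∈ 𝔻}`. -/
def SymBidisc : Set (ℂ × ℂ) :=
  {x | ∃ z w : ℂ, ‖z‖ < 1 ∧ ‖w‖ < 1 ∧ x = (z + w, z * w)}

/-- `β(s,p) = (s - s̄ p)/(1 - |p|²)`. -/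
noncomputable def pentaBeta (s p : ℂ) : ℂ :=
  (s - (starRingEnd ℂ) s * p) / ((1 : ℂ) - (‖p‖ ^ 2 : ℝ))

/-- The pentablock `𝒫`. -/
noncomputable def Pentablock : Set (ℂ × ℂ × ℂ) :=
  {x | (x.2.1, x.2.2) ∈ SymBidisc ∧
    ‖x.1‖ <
      ‖1 - ((1 / 2 : ℂ) * x.2.1 * (starRingEnd ℂ) (pentaBeta x.2.1 x.2.2)) /
        ((1 : ℂ) + (Real.sqrt (1 - ‖pentaBeta x.2.1 x.2.2‖ ^ 2) : ℝ))‖}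

/-- The `(k,1,2)`-action `m_λ.(a,s,p) = (λ^k a, λ s, λ² p)`. -/
def pentaAct (k : ℕ) (lam : ℂ) (x : ℂ × ℂ × ℂ) : ℂ × ℂ × ℂ :=
  (lam ^ k * x.1, lam * x.2.1, lam ^ 2 * x.2.2)

/-- The `(k,1,2)`-Minkowski functional of the pentablock. -/
noncomputable def pentaMinkowski (k : ℕ) (x : ℂ × ℂ × ℂ) : ℝ :=
  sInf {t : ℝ | 0 < t ∧ pentaAct k ((t⁻¹ : ℝ) : ℂ) x ∈ Pentablock}

noncomputable def Complex.abs : AbsoluteValue ℂ ℝ where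
  toFun z := ‖z‖
  map_mul' := norm_mul
  nonneg' := norm_nonneg
  eq_zero' _ := norm_eq_zero
  add_le' := norm_add_le

theorem Complex.norm_eq_abs (z : ℂ) : ‖z‖ = Complex.abs z := rfl

theorem Complex.sq_abs (z : ℂ) : Complex.abs z ^ 2 = Complex.normSq z := Complex.sq_norm z

theorem Complex.abs_apply (z : ℂ) : Complex.abs z = Real.sqrt (Complex.normSq z) := Complex.norm_def z

theorem Complex.abs_ofReal (r : ℝ) : Complex.abs (r : ℂ) = |r| := Complex.norm_real r

theorem Complex.abs_conj (z : ℂ) : Complex.abs ((starRingEnd ℂ) z) = Complex.abs z := Complex.norm_conj z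

theorem Complex.continuous_abs : Continuous Complex.abs := continuous_norm

theorem Complex.abs.pos {z : ℂ} (h : z ≠ 0) : 0 < Complex.abs z := norm_pos_iff.2 h

theorem Complex.abs.sub_le_add (a b : ℂ) : Complex.abs (a - b) ≤ Complex.abs a + Complex.abs b :=
  norm_sub_le a b

lemma sym_identity (z w : ℂ) :
    (z + w) - (starRingEnd ℂ) (z + w) * (z * w)
      = z * (1 - ((Complex.abs w ^ 2 : ℝ) : ℂ)) + w * (1 - ((Complex.abs z ^ 2 : ℝ) : ℂ)) := by
  have hz : ((Complex.abs z ^ 2 : ℝ) : ℂ) = z * (starRingEnd ℂ) z := by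
    rw [Complex.sq_abs, Complex.mul_conj]
  have hw : ((Complex.abs w ^ 2 : ℝ) : ℂ) = w * (starRingEnd ℂ) w := by
    rw [Complex.sq_abs, Complex.mul_conj]
  rw [hz, hw, map_add]
  ring

lemma aux_root_bound {s p : ℂ} (z w : ℂ)
    (h : Complex.abs (s - (starRingEnd ℂ) s * p) < 1 - Complex.abs p ^ 2)
    (hs : s = z + w) (hp : p = z * w) : Complex.abs z < 1 := by
  have hpp : Complex.abs p < 1 := by
    nlinarith [Complex.abs.nonneg (s - (starRingEnd ℂ) s * p), Complex.abs.nonneg p]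
  by_contra hz
  push_neg at hz
  have hw0 : Complex.abs w ≤ Complex.abs p := by
    have := Complex.abs.nonneg w
    calc Complex.abs w = Complex.abs w * 1 := by ring
    _ ≤ Complex.abs w * Complex.abs z := by nlinarith
    _ = Complex.abs p := by rw [hp, map_mul]; ring
  have hw1 : Complex.abs w < 1 := lt_of_le_of_lt hw0 hpp
  have hid : s - (starRingEnd ℂ) s * p
      = z * (1 - ((Complex.abs w ^ 2 : ℝ) : ℂ)) + w * (1 - ((Complex.abs z ^ 2 : ℝ) : ℂ)) := by
    rw [hs, hp]; exact sym_identity z w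
  set X := z * (1 - ((Complex.abs w ^ 2 : ℝ) : ℂ))
  set Y := w * (1 - ((Complex.abs z ^ 2 : ℝ) : ℂ))
  have hX : Complex.abs X = Complex.abs z * (1 - Complex.abs w ^ 2) := by
    rw [map_mul]
    congr 1
    have : (1 : ℂ) - ((Complex.abs w ^ 2 : ℝ) : ℂ) = (((1 - Complex.abs w ^ 2 : ℝ)) : ℂ) := by
      push_cast; ring
    rw [this, Complex.abs_ofReal, abs_of_nonneg]
    nlinarith [Complex.abs.nonneg w]
  have hY : Complex.abs Y = Complex.abs w * (Complex.abs z ^ 2 - 1) := by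
    rw [map_mul]
    congr 1
    have : (1 : ℂ) - ((Complex.abs z ^ 2 : ℝ) : ℂ) = (((1 - Complex.abs z ^ 2 : ℝ)) : ℂ) := by
      push_cast; ring
    rw [this, Complex.abs_ofReal, abs_of_nonpos]
    · ring
    · nlinarith
  have hlow : Complex.abs X - Complex.abs Y ≤ Complex.abs (X + Y) := by
    have h1 := Complex.abs.add_le (X + Y) (-Y)
    rw [Complex.abs.map_neg] at h1
    simp only [add_neg_cancel_right] at h1
    linarith
  rw [hid] at h
  have hzp : Complex.abs p = Complex.abs z * Complex.abs w := by rw [hp, map_mul]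
  rw [hzp] at h hpp
  have habs1 : Complex.abs z * Complex.abs w < 1 := hpp
  have key : 0 ≤ (Complex.abs z - 1) * (1 - Complex.abs w) * (1 - Complex.abs z * Complex.abs w) :=
    mul_nonneg (mul_nonneg (by linarith) (by linarith)) (by linarith)
  nlinarith [hX, hY, hlow, h, key, Complex.abs.nonneg w, Complex.abs.nonneg z]

lemma mem_symBidisc_iff {s p : ℂ} :
    (s, p) ∈ SymBidisc ↔ Complex.abs (s - (starRingEnd ℂ) s * p) < 1 - Complex.abs p ^ 2 := by
  constructor
  · rintro ⟨z, w, hz, hw, h⟩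
    change Complex.abs z < 1 at hz
    change Complex.abs w < 1 at hw
    obtain ⟨hs, hp⟩ : s = z + w ∧ p = z * w := by
      constructor
      · exact congrArg Prod.fst h
      · exact congrArg Prod.snd h
    rw [hs, hp, sym_identity z w]
    have h1 : Complex.abs (z * (1 - ((Complex.abs w ^ 2 : ℝ) : ℂ)))
        = Complex.abs z * (1 - Complex.abs w ^ 2) := by
      rw [map_mul]
      congr 1
      have : (1 : ℂ) - ((Complex.abs w ^ 2 : ℝ) : ℂ) = (((1 - Complex.abs w ^ 2 : ℝ)) : ℂ) := by
        push_cast; ring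
      rw [this, Complex.abs_ofReal, abs_of_nonneg]
      nlinarith [Complex.abs.nonneg w]
    have h2 : Complex.abs (w * (1 - ((Complex.abs z ^ 2 : ℝ) : ℂ)))
        = Complex.abs w * (1 - Complex.abs z ^ 2) := by
      rw [map_mul]
      congr 1
      have : (1 : ℂ) - ((Complex.abs z ^ 2 : ℝ) : ℂ) = (((1 - Complex.abs z ^ 2 : ℝ)) : ℂ) := by
        push_cast; ring
      rw [this, Complex.abs_ofReal, abs_of_nonneg]
      nlinarith [Complex.abs.nonneg z]
    calc Complex.abs (z * (1 - ((Complex.abs w ^ 2 : ℝ) : ℂ)) + w * (1 - ((Complex.abs z ^ 2 : ℝ) : ℂ)))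
        ≤ _ + _ := Complex.abs.add_le _ _
    _ = Complex.abs z * (1 - Complex.abs w ^ 2) + Complex.abs w * (1 - Complex.abs z ^ 2) := by
        rw [h1, h2]
    _ < 1 - Complex.abs (z * w) ^ 2 := by
        rw [map_mul]
        nlinarith [Complex.abs.nonneg z, Complex.abs.nonneg w,
          mul_pos (mul_pos (sub_pos.2 hz) (sub_pos.2 hw))
            (sub_pos.2 (by nlinarith [Complex.abs.nonneg z, Complex.abs.nonneg w] :
              Complex.abs z * Complex.abs w < 1))]
  · intro h
    obtain ⟨c, hc⟩ := IsAlgClosed.exists_pow_nat_eq (s ^ 2 - 4 * p) (n := 2) (by norm_num)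
    refine ⟨(s + c) / 2, (s - c) / 2, ?_, ?_, ?_⟩
    · exact aux_root_bound ((s + c) / 2) ((s - c) / 2) h (by ring)
        (by linear_combination (1/4 : ℂ) * hc)
    · exact aux_root_bound ((s - c) / 2) ((s + c) / 2) h (by ring)
        (by linear_combination (1/4 : ℂ) * hc)
    · have : (s + c) / 2 + (s - c) / 2 = s := by ring
      rw [this]
      congr 1
      linear_combination (1/4 : ℂ) * hc

noncomputable def gP (s p : ℂ) : ℂ :=
  1 - ((1 / 2 : ℂ) * s * (starRingEnd ℂ) (pentaBeta s p)) /
        ((1 : ℂ) + (Real.sqrt (1 - Complex.abs (pentaBeta s p) ^ 2) : ℝ))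

lemma abs_p_lt_one {s p : ℂ} (h : (s, p) ∈ SymBidisc) : Complex.abs p < 1 := by
  rw [mem_symBidisc_iff] at h
  nlinarith [Complex.abs.nonneg (s - (starRingEnd ℂ) s * p), Complex.abs.nonneg p]

lemma beta_mul_denom {s p : ℂ} (hp : Complex.abs p < 1) :
    pentaBeta s p * ((1 : ℂ) - (Complex.abs p ^ 2 : ℝ)) = s - (starRingEnd ℂ) s * p := by
  rw [pentaBeta]
  apply div_mul_cancel₀
  have h1 : ((1 : ℂ) - (Complex.abs p ^ 2 : ℝ)) = (((1 - Complex.abs p ^ 2 : ℝ)) : ℂ) := by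
    push_cast; ring
  rw [Complex.norm_eq_abs, h1]
  rw [Complex.ofReal_ne_zero]
  nlinarith [Complex.abs.nonneg p]

lemma abs_beta_lt_one {s p : ℂ} (h : (s, p) ∈ SymBidisc) :
    Complex.abs (pentaBeta s p) < 1 := by
  have hp := abs_p_lt_one h
  rw [mem_symBidisc_iff] at h
  have hd : (0:ℝ) < 1 - Complex.abs p ^ 2 := by nlinarith [Complex.abs.nonneg p]
  have := beta_mul_denom (s := s) hp
  have habs := congrArg Complex.abs this
  rw [map_mul] at habs
  have h1 : Complex.abs ((1 : ℂ) - (Complex.abs p ^ 2 : ℝ)) = 1 - Complex.abs p ^ 2 := by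
    have h2 : ((1 : ℂ) - (Complex.abs p ^ 2 : ℝ)) = (((1 - Complex.abs p ^ 2 : ℝ)) : ℂ) := by
      push_cast; ring
    rw [h2, Complex.abs_ofReal, abs_of_pos hd]
  rw [h1] at habs
  have : Complex.abs (pentaBeta s p) * (1 - Complex.abs p ^ 2) < 1 - Complex.abs p ^ 2 := by
    rw [habs]; exact h
  nlinarith

lemma s_eq_beta {s p : ℂ} (h : (s, p) ∈ SymBidisc) :
    s = pentaBeta s p + (starRingEnd ℂ) (pentaBeta s p) * p := by
  have hp := abs_p_lt_one h
  have hd : (0:ℝ) < 1 - Complex.abs p ^ 2 := by nlinarith [Complex.abs.nonneg p]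
  have h1 := beta_mul_denom (s := s) hp
  have h2 := congrArg (starRingEnd ℂ) h1
  simp only [map_mul, map_sub, Complex.conj_conj, map_one] at h2
  rw [Complex.conj_ofReal] at h2
  have hpc : p * (starRingEnd ℂ) p = ((Complex.abs p ^ 2 : ℝ) : ℂ) := by
    rw [Complex.mul_conj, Complex.sq_abs]
  have hdc : ((1 : ℂ) - (Complex.abs p ^ 2 : ℝ)) ≠ 0 := by
    have h3 : ((1 : ℂ) - (Complex.abs p ^ 2 : ℝ)) = (((1 - Complex.abs p ^ 2 : ℝ)) : ℂ) := by
      push_cast; ring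
    rw [h3, Complex.ofReal_ne_zero]
    exact ne_of_gt hd
  apply mul_right_cancel₀ hdc
  linear_combination -h1 - p * h2 + s * hpc

lemma master_identity {b p ρ : ℂ} (hρ2 : ρ ^ 2 = 1 - b * (starRingEnd ℂ) b) (z : ℂ) :
    (1 - (b + (starRingEnd ℂ) b * p) * z + p * z ^ 2) * (4 * ρ ^ 2 * (1 + ρ) ^ 2)
      = ρ * ((1 + ρ) ^ 2 - ((starRingEnd ℂ) b) ^ 2 * p) * ((1 + ρ) - b * z) ^ 2
        + ρ * (p * (1 + ρ) ^ 2 - b ^ 2) * ((1 + ρ) * z - (starRingEnd ℂ) b) ^ 2 := by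
  linear_combination (ρ * (1 + p * z ^ 2 - 2 * ((starRingEnd ℂ) b) * p * z - 2 * b * z
    + b * ((starRingEnd ℂ) b) + b * ((starRingEnd ℂ) b) * p * z ^ 2)
    - 2 * ρ ^ 2 * z * (((starRingEnd ℂ) b) * p + b) - ρ ^ 3 * (1 + p * z ^ 2)) * hρ2

lemma center_identity {b p ρ : ℂ} (hρ2 : ρ ^ 2 = 1 - b * (starRingEnd ℂ) b) :
    (1 + ρ) ^ 2 - (b + (starRingEnd ℂ) b * p) * (starRingEnd ℂ) b * (1 + ρ)
        + p * ((starRingEnd ℂ) b) ^ 2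
      = ρ * ((1 + ρ) ^ 2 - ((starRingEnd ℂ) b) ^ 2 * p) := by
  linear_combination (-1 - ρ) * hρ2

lemma blaschke_abs {u v : ℂ} (hu : Complex.abs u ≤ 1) (hv : Complex.abs v ≤ 1) :
    Complex.abs (v - u) ≤ Complex.abs (1 - (starRingEnd ℂ) u * v) := by
  have hqu : Complex.normSq u ≤ 1 := by
    rw [← Complex.sq_abs]; nlinarith [Complex.abs.nonneg u]
  have hqv : Complex.normSq v ≤ 1 := by
    rw [← Complex.sq_abs]; nlinarith [Complex.abs.nonneg v]
  have hid : Complex.normSq (1 - (starRingEnd ℂ) u * v)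
      = Complex.normSq (v - u) + (1 - Complex.normSq u) * (1 - Complex.normSq v) := by
    simp only [Complex.normSq_apply, Complex.sub_re, Complex.sub_im, Complex.mul_re,
      Complex.mul_im, Complex.one_re, Complex.one_im, Complex.conj_re, Complex.conj_im]
    ring
  rw [Complex.abs_apply, Complex.abs_apply]
  apply Real.sqrt_le_sqrt
  rw [hid]
  nlinarith [mul_nonneg (sub_nonneg.2 hqu) (sub_nonneg.2 hqv)]

lemma normSq_diff (b z : ℂ) (r : ℝ) :
    Complex.normSq (((1 + r : ℝ) : ℂ) - b * z)
        - Complex.normSq (((1 + r : ℝ) : ℂ) * z - (starRingEnd ℂ) b)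
      = ((1 + r) ^ 2 - Complex.normSq b) * (1 - Complex.normSq z) := by
  simp only [Complex.normSq_apply, Complex.sub_re, Complex.sub_im, Complex.mul_re,
    Complex.mul_im, Complex.ofReal_re, Complex.ofReal_im, Complex.conj_re, Complex.conj_im]
  ring

lemma rho_sq {b : ℂ} {r : ℝ} (hr2 : r ^ 2 = 1 - Complex.abs b ^ 2) :
    ((r : ℝ) : ℂ) ^ 2 = 1 - b * (starRingEnd ℂ) b := by
  rw [← Complex.ofReal_pow, hr2, Complex.mul_conj, ← Complex.sq_abs]
  push_cast
  ring

lemma abs_one_add_coe {r : ℝ} (hr0 : 0 < r) : Complex.abs (1 + (r : ℂ)) = 1 + r := by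
  have h : (1 : ℂ) + (r : ℂ) = ((1 + r : ℝ) : ℂ) := by push_cast; ring
  rw [h, Complex.abs_ofReal, abs_of_pos (by linarith)]

lemma blaschke_scaled {b p : ℂ} {r : ℝ} (hb : Complex.abs b < 1) (hp : Complex.abs p < 1)
    (hr0 : 0 < r) :
    Complex.abs (p * (1 + (r : ℂ)) ^ 2 - b ^ 2)
      ≤ Complex.abs ((1 + (r : ℂ)) ^ 2 - ((starRingEnd ℂ) b) ^ 2 * p) := by
  have hN : (1 : ℂ) + (r : ℂ) = ((1 + r : ℝ) : ℂ) := by push_cast; ring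
  have hNpos : (0:ℝ) < 1 + r := by linarith
  set W : ℂ := (((1 + r) ^ 2 : ℝ) : ℂ) with hW
  have hW2 : ((1 : ℂ) + (r : ℂ)) ^ 2 = W := by rw [hN, hW]; push_cast; ring
  have hWne : W ≠ 0 := by
    rw [hW, Complex.ofReal_ne_zero]; positivity
  have hu : Complex.abs (b ^ 2 / W) ≤ 1 := by
    rw [map_div₀, map_pow, hW, Complex.abs_ofReal, abs_of_pos (by positivity)]
    rw [div_le_one (by positivity)]
    nlinarith [Complex.abs.nonneg b]
  have key := blaschke_abs (u := b ^ 2 / W) (v := p) hu hp.le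
  have hcu : (starRingEnd ℂ) (b ^ 2 / W) = ((starRingEnd ℂ) b) ^ 2 / W := by
    rw [map_div₀, map_pow, hW, Complex.conj_ofReal]
  rw [hcu] at key
  have h1 : p * (1 + (r : ℂ)) ^ 2 - b ^ 2 = W * (p - b ^ 2 / W) := by
    rw [hW2]; field_simp
  have h2 : (1 + (r : ℂ)) ^ 2 - ((starRingEnd ℂ) b) ^ 2 * p
      = W * (1 - ((starRingEnd ℂ) b) ^ 2 / W * p) := by
    rw [hW2]; field_simp
  rw [h1, h2, map_mul, map_mul]
  exact mul_le_mul_of_nonneg_left key (Complex.abs.nonneg W)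

lemma core_lower {b p : ℂ} {r : ℝ} (hb : Complex.abs b < 1) (hp : Complex.abs p < 1)
    (hr0 : 0 < r) (hr2 : r ^ 2 = 1 - Complex.abs b ^ 2) {z : ℂ} (hz : Complex.abs z < 1) :
    Complex.abs ((1 + (r : ℂ)) ^ 2 - ((starRingEnd ℂ) b) ^ 2 * p) / (2 * (1 + r))
        * (1 - Complex.abs z ^ 2)
      ≤ Complex.abs (1 - (b + (starRingEnd ℂ) b * p) * z + p * z ^ 2) := by
  have hρ2 := rho_sq (b := b) hr2
  have hmi := master_identity (p := p) hρ2 z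
  have habs := congrArg Complex.abs hmi
  rw [map_mul] at habs
  have h4 : Complex.abs (4 * ((r:ℝ):ℂ) ^ 2 * (1 + ((r:ℝ):ℂ)) ^ 2) = 4 * r ^ 2 * (1 + r) ^ 2 := by
    have : (4 * ((r:ℝ):ℂ) ^ 2 * (1 + ((r:ℝ):ℂ)) ^ 2) = (((4 * r ^ 2 * (1 + r) ^ 2 : ℝ)) : ℂ) := by
      push_cast; ring
    rw [this, Complex.abs_ofReal, abs_of_pos (by positivity)]
  rw [h4] at habs
  set X : ℂ := ((r:ℝ):ℂ) * ((1 + ((r:ℝ):ℂ)) ^ 2 - ((starRingEnd ℂ) b) ^ 2 * p)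
      * ((1 + ((r:ℝ):ℂ)) - b * z) ^ 2 with hX
  set Y : ℂ := ((r:ℝ):ℂ) * (p * (1 + ((r:ℝ):ℂ)) ^ 2 - b ^ 2)
      * ((1 + ((r:ℝ):ℂ)) * z - (starRingEnd ℂ) b) ^ 2 with hY
  have hXY : Complex.abs X - Complex.abs Y ≤ Complex.abs (X + Y) := by
    have h1 := Complex.abs.add_le (X + Y) (-Y)
    rw [Complex.abs.map_neg] at h1
    simp only [add_neg_cancel_right] at h1
    linarith
  rw [← habs] at hXY
  set A : ℝ := Complex.abs ((1 + ((r:ℝ):ℂ)) ^ 2 - ((starRingEnd ℂ) b) ^ 2 * p) with hA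
  have hXv : Complex.abs X = r * A * Complex.abs ((1 + ((r:ℝ):ℂ)) - b * z) ^ 2 := by
    rw [hX, map_mul, map_mul, map_pow, Complex.abs_ofReal, abs_of_pos hr0]
  have hYv : Complex.abs Y = r * Complex.abs (p * (1 + ((r:ℝ):ℂ)) ^ 2 - b ^ 2)
      * Complex.abs ((1 + ((r:ℝ):ℂ)) * z - (starRingEnd ℂ) b) ^ 2 := by
    rw [hY, map_mul, map_mul, map_pow, Complex.abs_ofReal, abs_of_pos hr0]
  have hBl := blaschke_scaled (b := b) (p := p) (r := r) hb hp hr0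
  have hND : Complex.abs ((1 + ((r:ℝ):ℂ)) - b * z) ^ 2
      - Complex.abs ((1 + ((r:ℝ):ℂ)) * z - (starRingEnd ℂ) b) ^ 2
      = ((1 + r) ^ 2 - Complex.abs b ^ 2) * (1 - Complex.abs z ^ 2) := by
    have h5 : (1 : ℂ) + ((r:ℝ):ℂ) = ((1 + r : ℝ) : ℂ) := by push_cast; ring
    rw [Complex.sq_abs, Complex.sq_abs, h5, normSq_diff, ← Complex.sq_abs b, ← Complex.sq_abs z]
  -- combine
  have hApos : 0 ≤ A := Complex.abs.nonneg _
  have hzsq : 0 ≤ 1 - Complex.abs z ^ 2 := by nlinarith [Complex.abs.nonneg z]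
  have habs2 : Complex.abs ((1 + ((r:ℝ):ℂ)) * z - (starRingEnd ℂ) b) ^ 2 ≥ 0 := by positivity
  have hmain : r * A * (((1 + r) ^ 2 - Complex.abs b ^ 2) * (1 - Complex.abs z ^ 2))
      ≤ Complex.abs (1 - (b + (starRingEnd ℂ) b * p) * z + p * z ^ 2)
        * (4 * r ^ 2 * (1 + r) ^ 2) := by
    have h6 : r * Complex.abs (p * (1 + ((r:ℝ):ℂ)) ^ 2 - b ^ 2)
        * Complex.abs ((1 + ((r:ℝ):ℂ)) * z - (starRingEnd ℂ) b) ^ 2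
        ≤ r * A * Complex.abs ((1 + ((r:ℝ):ℂ)) * z - (starRingEnd ℂ) b) ^ 2 := by
      rw [hA]
      exact mul_le_mul_of_nonneg_right (mul_le_mul_of_nonneg_left hBl hr0.le) habs2
    have h7 : r * A * (((1 + r) ^ 2 - Complex.abs b ^ 2) * (1 - Complex.abs z ^ 2))
        = r * A * Complex.abs ((1 + ((r:ℝ):ℂ)) - b * z) ^ 2
          - r * A * Complex.abs ((1 + ((r:ℝ):ℂ)) * z - (starRingEnd ℂ) b) ^ 2 := by
      rw [← hND]; ring
    rw [h7]
    have h8 : r * A * Complex.abs ((1 + ((r:ℝ):ℂ)) - b * z) ^ 2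
          - r * A * Complex.abs ((1 + ((r:ℝ):ℂ)) * z - (starRingEnd ℂ) b) ^ 2
        ≤ Complex.abs X - Complex.abs Y := by
      rw [hXv, hYv]; linarith
    linarith
  have hfin : ((1 + r) ^ 2 - Complex.abs b ^ 2) = 2 * r * (1 + r) := by nlinarith
  rw [hfin] at hmain
  have h2 : (0:ℝ) < 2 * r ^ 2 * (1 + r) := by positivity
  rw [div_mul_eq_mul_div, div_le_iff₀ (by positivity)]
  have e1 : (2 * r ^ 2 * (1 + r)) * (A * (1 - Complex.abs z ^ 2))
      = r * A * (2 * r * (1 + r) * (1 - Complex.abs z ^ 2)) := by ring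
  have e2 : (2 * r ^ 2 * (1 + r)) * (Complex.abs (1 - (b + (starRingEnd ℂ) b * p) * z + p * z ^ 2)
        * (2 * (1 + r)))
      = Complex.abs (1 - (b + (starRingEnd ℂ) b * p) * z + p * z ^ 2)
        * (4 * r ^ 2 * (1 + r) ^ 2) := by ring
  have hmain2 : (2 * r ^ 2 * (1 + r)) * (A * (1 - Complex.abs z ^ 2))
      ≤ (2 * r ^ 2 * (1 + r)) * (Complex.abs (1 - (b + (starRingEnd ℂ) b * p) * z + p * z ^ 2)
        * (2 * (1 + r))) := by
    rw [e1, e2]; linarith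
  exact le_of_mul_le_mul_left hmain2 h2

lemma core_eq {b p : ℂ} {r : ℝ} (hb : Complex.abs b < 1) (hp : Complex.abs p < 1)
    (hr0 : 0 < r) (hr2 : r ^ 2 = 1 - Complex.abs b ^ 2) :
    ∃ z : ℂ, Complex.abs z < 1 ∧
      Complex.abs ((1 + (r : ℂ)) ^ 2 - ((starRingEnd ℂ) b) ^ 2 * p) / (2 * (1 + r))
          * (1 - Complex.abs z ^ 2)
        = Complex.abs (1 - (b + (starRingEnd ℂ) b * p) * z + p * z ^ 2) := by
  have hρ2 := rho_sq (b := b) hr2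
  have hNc : (1 : ℂ) + (r : ℂ) = ((1 + r : ℝ) : ℂ) := by push_cast; ring
  have hNne : (1 : ℂ) + (r : ℂ) ≠ 0 := by
    rw [hNc, Complex.ofReal_ne_zero]; positivity
  refine ⟨(starRingEnd ℂ) b / (1 + (r : ℂ)), ?_, ?_⟩
  · rw [map_div₀, Complex.abs_conj, abs_one_add_coe hr0, div_lt_one (by positivity)]
    linarith
  · have hci := center_identity (p := p) hρ2
    have hQ : (1 - (b + (starRingEnd ℂ) b * p) * ((starRingEnd ℂ) b / (1 + (r : ℂ)))
          + p * ((starRingEnd ℂ) b / (1 + (r : ℂ))) ^ 2) * (1 + (r : ℂ)) ^ 2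
        = ((r : ℂ)) * ((1 + (r : ℂ)) ^ 2 - ((starRingEnd ℂ) b) ^ 2 * p) := by
      rw [← hci]; field_simp
    have habsQ := congrArg Complex.abs hQ
    rw [map_mul, map_mul, map_pow, abs_one_add_coe hr0, Complex.abs_ofReal,
      abs_of_pos hr0] at habsQ
    have hz0 : Complex.abs ((starRingEnd ℂ) b / (1 + (r : ℂ))) = Complex.abs b / (1 + r) := by
      rw [map_div₀, Complex.abs_conj, abs_one_add_coe hr0]
    rw [hz0]
    have hone : (0:ℝ) < 1 + r := by linarith
    have hz2 : 1 - (Complex.abs b / (1 + r)) ^ 2 = 2 * r / (1 + r) := by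
      rw [div_pow, sub_div' (by positivity)]
      rw [div_eq_div_iff (by positivity) (by positivity)]
      nlinarith
    rw [hz2]
    have hQv : Complex.abs (1 - (b + (starRingEnd ℂ) b * p) * ((starRingEnd ℂ) b / (1 + (r : ℂ)))
          + p * ((starRingEnd ℂ) b / (1 + (r : ℂ))) ^ 2)
        = r * Complex.abs ((1 + (r : ℂ)) ^ 2 - ((starRingEnd ℂ) b) ^ 2 * p) / (1 + r) ^ 2 := by
      rw [eq_div_iff (by positivity)]
      exact habsQ
    rw [hQv]
    field_simp

lemma penta_facts {s p : ℂ} (h : (s, p) ∈ SymBidisc) :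
    0 < Complex.abs (gP s p) ∧ Complex.abs (gP s p) < 2 ∧ Complex.abs s < 2 ∧
    (∀ z : ℂ, Complex.abs z < 1 →
      Complex.abs (gP s p) * (1 - Complex.abs z ^ 2) ≤ Complex.abs (1 - s * z + p * z ^ 2)) ∧
    (∃ z : ℂ, Complex.abs z < 1 ∧
      Complex.abs (gP s p) * (1 - Complex.abs z ^ 2) = Complex.abs (1 - s * z + p * z ^ 2)) := by
  have hp := abs_p_lt_one h
  have hb := abs_beta_lt_one h
  have hs := s_eq_beta h
  set b : ℂ := pentaBeta s p with hbdef
  set r : ℝ := Real.sqrt (1 - Complex.abs b ^ 2) with hrdef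
  have hb2 : (0:ℝ) < 1 - Complex.abs b ^ 2 := by nlinarith [Complex.abs.nonneg b]
  have hr0 : 0 < r := Real.sqrt_pos.2 hb2
  have hr2 : r ^ 2 = 1 - Complex.abs b ^ 2 := Real.sq_sqrt hb2.le
  have hr1 : r ≤ 1 := by nlinarith [Complex.abs.nonneg b]
  have hone : (0:ℝ) < 1 + r := by linarith
  have hρ2 := rho_sq (b := b) hr2
  have hNne : (1 : ℂ) + (r : ℂ) ≠ 0 := by
    have hNc : (1 : ℂ) + (r : ℂ) = ((1 + r : ℝ) : ℂ) := by push_cast; ring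
    rw [hNc, Complex.ofReal_ne_zero]; positivity
  -- the gP formula
  have hg1 : gP s p * (2 * (1 + (r : ℂ)))
      = (1 + (r : ℂ)) ^ 2 - ((starRingEnd ℂ) b) ^ 2 * p := by
    have hg0 : gP s p = 1 - ((1 / 2 : ℂ) * s * (starRingEnd ℂ) b) / (1 + (r : ℂ)) := by
      rw [gP, ← hbdef, ← hrdef]
    rw [hg0, hs]
    field_simp
    linear_combination (-1 : ℂ) * hρ2
  set A : ℝ := Complex.abs ((1 + (r : ℂ)) ^ 2 - ((starRingEnd ℂ) b) ^ 2 * p) with hA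
  have hgabs : Complex.abs (gP s p) = A / (2 * (1 + r)) := by
    have := congrArg Complex.abs hg1
    rw [map_mul] at this
    have h2N : Complex.abs (2 * (1 + (r : ℂ))) = 2 * (1 + r) := by
      have : (2 : ℂ) * (1 + (r : ℂ)) = (((2 * (1 + r) : ℝ)) : ℂ) := by push_cast; ring
      rw [this, Complex.abs_ofReal, abs_of_pos (by positivity)]
    rw [h2N] at this
    rw [eq_div_iff (by positivity)]
    exact this
  have hbp : Complex.abs (((starRingEnd ℂ) b) ^ 2 * p) = Complex.abs b ^ 2 * Complex.abs p := by
    rw [map_mul, map_pow, Complex.abs_conj]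
  have hN2 : Complex.abs ((1 + (r : ℂ)) ^ 2) = (1 + r) ^ 2 := by
    rw [map_pow, abs_one_add_coe hr0]
  have hAlow : (1 + r) ^ 2 - Complex.abs b ^ 2 * Complex.abs p ≤ A := by
    have h1 := Complex.abs.add_le ((1 + (r : ℂ)) ^ 2 - ((starRingEnd ℂ) b) ^ 2 * p)
      (((starRingEnd ℂ) b) ^ 2 * p)
    simp only [sub_add_cancel] at h1
    rw [hN2, hbp] at h1
    linarith
  have hAup : A ≤ (1 + r) ^ 2 + Complex.abs b ^ 2 * Complex.abs p := by
    have h1 := Complex.abs.sub_le_add ((1 + (r : ℂ)) ^ 2) (((starRingEnd ℂ) b) ^ 2 * p)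
    rw [hN2, hbp] at h1
    linarith
  have hApos : 0 < A := by
    nlinarith [Complex.abs.nonneg b, Complex.abs.nonneg p]
  refine ⟨?_, ?_, ?_, ?_, ?_⟩
  · rw [hgabs]; positivity
  · rw [hgabs, div_lt_iff₀ (by positivity)]
    nlinarith [Complex.abs.nonneg b, Complex.abs.nonneg p]
  · rw [hs]
    calc Complex.abs (b + (starRingEnd ℂ) b * p)
        ≤ Complex.abs b + Complex.abs ((starRingEnd ℂ) b * p) := Complex.abs.add_le _ _
    _ = Complex.abs b + Complex.abs b * Complex.abs p := by rw [map_mul, Complex.abs_conj]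
    _ < 2 := by nlinarith [Complex.abs.nonneg b, Complex.abs.nonneg p]
  · intro z hz
    rw [hgabs, hs]
    exact core_lower hb hp hr0 hr2 hz
  · obtain ⟨z, hz1, hz2⟩ := core_eq (p := p) hb hp hr0 hr2
    refine ⟨z, hz1, ?_⟩
    rw [hgabs, hs]
    exact hz2

lemma symBidisc_balanced {s p lam : ℂ} (h : (s, p) ∈ SymBidisc)
    (hl : Complex.abs lam ≤ 1) : (lam * s, lam ^ 2 * p) ∈ SymBidisc := by
  obtain ⟨z, w, hz, hw, hx⟩ := h
  change Complex.abs z < 1 at hz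
  change Complex.abs w < 1 at hw
  have hs : s = z + w := congrArg Prod.fst hx
  have hp : p = z * w := congrArg Prod.snd hx
  refine ⟨lam * z, lam * w, ?_, ?_, ?_⟩
  · rw [Complex.norm_eq_abs, map_mul]
    nlinarith [Complex.abs.nonneg lam, Complex.abs.nonneg z]
  · rw [Complex.norm_eq_abs, map_mul]
    nlinarith [Complex.abs.nonneg lam, Complex.abs.nonneg w]
  · rw [hs, hp, Prod.ext_iff]
    constructor
    · simp; ring
    · simp; ring

lemma gP_mono {s p : ℂ} (h : (s, p) ∈ SymBidisc) {lam : ℂ} (hl : Complex.abs lam ≤ 1) :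
    Complex.abs (gP s p) ≤ Complex.abs (gP (lam * s) (lam ^ 2 * p)) := by
  have hsp' := symBidisc_balanced h hl
  obtain ⟨-, -, -, hI1, -⟩ := penta_facts h
  obtain ⟨-, -, -, -, hI2⟩ := penta_facts hsp'
  obtain ⟨z, hz, heq⟩ := hI2
  have hlz : Complex.abs (lam * z) ≤ Complex.abs z := by
    rw [map_mul]
    nlinarith [Complex.abs.nonneg lam, Complex.abs.nonneg z]
  have h1 : (1 : ℂ) - lam * s * z + lam ^ 2 * p * z ^ 2
      = 1 - s * (lam * z) + p * (lam * z) ^ 2 := by ring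
  have h2 := hI1 (lam * z) (lt_of_le_of_lt hlz hz)
  rw [← h1, ← heq] at h2
  have h3 : Complex.abs (gP s p) * (1 - Complex.abs z ^ 2)
      ≤ Complex.abs (gP s p) * (1 - Complex.abs (lam * z) ^ 2) := by
    apply mul_le_mul_of_nonneg_left _ (Complex.abs.nonneg _)
    nlinarith [Complex.abs.nonneg (lam * z), Complex.abs.nonneg z]
  have h4 : Complex.abs (gP s p) * (1 - Complex.abs z ^ 2)
      ≤ Complex.abs (gP (lam * s) (lam ^ 2 * p)) * (1 - Complex.abs z ^ 2) := le_trans h3 h2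
  have hpos : (0:ℝ) < 1 - Complex.abs z ^ 2 := by nlinarith [Complex.abs.nonneg z]
  exact le_of_mul_le_mul_right h4 hpos

lemma mem_pentablock_iff {x : ℂ × ℂ × ℂ} :
    x ∈ Pentablock ↔ (x.2.1, x.2.2) ∈ SymBidisc ∧
      Complex.abs x.1 < Complex.abs (gP x.2.1 x.2.2) := Iff.rfl

lemma isOpen_symBidisc : IsOpen SymBidisc := by
  have hset : SymBidisc = {x : ℂ × ℂ |
      Complex.abs (x.1 - (starRingEnd ℂ) x.1 * x.2) < 1 - Complex.abs x.2 ^ 2} := by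
    ext ⟨s, p⟩
    exact mem_symBidisc_iff
  rw [hset]
  apply isOpen_lt
  · exact Complex.continuous_abs.comp (continuous_fst.sub
      ((Complex.continuous_conj.comp continuous_fst).mul continuous_snd))
  · exact continuous_const.sub ((Complex.continuous_abs.comp continuous_snd).pow 2)

lemma continuousOn_gP_abs :
    ContinuousOn (fun q : ℂ × ℂ => Complex.abs (gP q.1 q.2))
      {q : ℂ × ℂ | Complex.abs q.2 < 1} := by
  apply Complex.continuous_abs.comp_continuousOn
  have hBcont : ContinuousOn (fun q : ℂ × ℂ => pentaBeta q.1 q.2)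
      {q : ℂ × ℂ | Complex.abs q.2 < 1} := by
    apply ContinuousOn.div
    · exact (continuous_fst.sub
        ((Complex.continuous_conj.comp continuous_fst).mul continuous_snd)).continuousOn
    · exact (continuous_const.sub (Complex.continuous_ofReal.comp
        ((Complex.continuous_abs.comp continuous_snd).pow 2))).continuousOn
    · intro q hq
      have h1 : ((1 : ℂ) - (Complex.abs q.2 ^ 2 : ℝ)) = (((1 - Complex.abs q.2 ^ 2 : ℝ)) : ℂ) := by
        push_cast; ring
      rw [Complex.norm_eq_abs, h1, Complex.ofReal_ne_zero]
      have : Complex.abs q.2 < 1 := hq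
      nlinarith [Complex.abs.nonneg q.2]
  unfold gP
  apply ContinuousOn.sub continuousOn_const
  apply ContinuousOn.div
  · exact (continuousOn_const.mul (continuous_fst.continuousOn)).mul
      (Complex.continuous_conj.comp_continuousOn hBcont)
  · apply ContinuousOn.add continuousOn_const
    exact Complex.continuous_ofReal.comp_continuousOn
      (Real.continuous_sqrt.comp_continuousOn
        (continuousOn_const.sub ((Complex.continuous_abs.comp_continuousOn hBcont).pow 2)))
  · intro q hq
    have h2 : (1 : ℂ) + ((Real.sqrt (1 - Complex.abs (pentaBeta q.1 q.2) ^ 2) : ℝ) : ℂ)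
        = (((1 + Real.sqrt (1 - Complex.abs (pentaBeta q.1 q.2) ^ 2) : ℝ)) : ℂ) := by
      push_cast; ring
    rw [h2, Complex.ofReal_ne_zero]
    nlinarith [Real.sqrt_nonneg (1 - Complex.abs (pentaBeta q.1 q.2) ^ 2)]

lemma isOpen_pentablock : IsOpen Pentablock := by
  have hU : IsOpen ((fun x : ℂ × ℂ × ℂ => (x.2.1, x.2.2)) ⁻¹' SymBidisc) :=
    isOpen_symBidisc.preimage ((continuous_fst.comp continuous_snd).prodMk
      (continuous_snd.comp continuous_snd))
  have hΩ : IsOpen {x : ℂ × ℂ × ℂ | Complex.abs x.2.2 < 1} :=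
    isOpen_lt (Complex.continuous_abs.comp (continuous_snd.comp continuous_snd)) continuous_const
  have hφ : ContinuousOn
      (fun x : ℂ × ℂ × ℂ => Complex.abs x.1 - Complex.abs (gP x.2.1 x.2.2))
      {x : ℂ × ℂ × ℂ | Complex.abs x.2.2 < 1} := by
    apply ContinuousOn.sub (Complex.continuous_abs.comp continuous_fst).continuousOn
    have hmap : ContinuousOn (fun x : ℂ × ℂ × ℂ => (x.2.1, x.2.2))
        {x : ℂ × ℂ × ℂ | Complex.abs x.2.2 < 1} :=
      ((continuous_fst.comp continuous_snd).prodMk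
        (continuous_snd.comp continuous_snd)).continuousOn
    have hmt : Set.MapsTo (fun x : ℂ × ℂ × ℂ => (x.2.1, x.2.2))
        {x : ℂ × ℂ × ℂ | Complex.abs x.2.2 < 1} {q : ℂ × ℂ | Complex.abs q.2 < 1} :=
      fun x hx => hx
    show ContinuousOn ((fun q : ℂ × ℂ => Complex.abs (gP q.1 q.2)) ∘
        (fun x : ℂ × ℂ × ℂ => (x.2.1, x.2.2))) {x : ℂ × ℂ × ℂ | Complex.abs x.2.2 < 1}
    exact ContinuousOn.comp continuousOn_gP_abs hmap hmt
  have hV : IsOpen ({x : ℂ × ℂ × ℂ | Complex.abs x.2.2 < 1} ∩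
      (fun x : ℂ × ℂ × ℂ => Complex.abs x.1 - Complex.abs (gP x.2.1 x.2.2)) ⁻¹' (Iio (0:ℝ))) :=
    hφ.isOpen_inter_preimage hΩ isOpen_Iio
  have hPeq : Pentablock = ((fun x : ℂ × ℂ × ℂ => (x.2.1, x.2.2)) ⁻¹' SymBidisc) ∩
      ({x : ℂ × ℂ × ℂ | Complex.abs x.2.2 < 1} ∩
        (fun x : ℂ × ℂ × ℂ => Complex.abs x.1 - Complex.abs (gP x.2.1 x.2.2)) ⁻¹' (Iio (0:ℝ))) := by
    ext x
    rw [mem_pentablock_iff]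
    constructor
    · rintro ⟨h1, h2⟩
      exact ⟨h1, abs_p_lt_one h1, by simpa using h2⟩
    · rintro ⟨h1, _, h3⟩
      exact ⟨h1, by simpa using h3⟩
  rw [hPeq]
  exact hU.inter hV

lemma pentaAct_one (k : ℕ) (x : ℂ × ℂ × ℂ) : pentaAct k 1 x = x := by
  simp [pentaAct]

lemma pentaAct_mul (k : ℕ) (μ ν : ℂ) (x : ℂ × ℂ × ℂ) :
    pentaAct k (μ * ν) x = pentaAct k μ (pentaAct k ν x) := by
  simp only [pentaAct, Prod.mk.injEq]
  refine ⟨by ring, by ring, by ring⟩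

lemma pentaAct_zero {k : ℕ} (hk : 1 ≤ k) (x : ℂ × ℂ × ℂ) : pentaAct k 0 x = 0 := by
  simp [pentaAct, zero_pow (by omega : k ≠ 0)]

lemma pentaAct_zero' (k : ℕ) (μ : ℂ) : pentaAct k μ 0 = 0 := by
  simp [pentaAct]

lemma continuous_pentaAct (k : ℕ) (μ : ℂ) : Continuous (pentaAct k μ) := by
  unfold pentaAct
  exact (continuous_const.mul continuous_fst).prodMk
    ((continuous_const.mul (continuous_fst.comp continuous_snd)).prodMk
      (continuous_const.mul (continuous_snd.comp continuous_snd)))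

lemma continuous_pentaAct_param (k : ℕ) (x : ℂ × ℂ × ℂ) :
    Continuous (fun μ : ℂ => pentaAct k μ x) := by
  unfold pentaAct
  exact ((continuous_pow k).mul continuous_const).prodMk
    ((continuous_id.mul continuous_const).prodMk
      ((continuous_pow 2).mul continuous_const))

lemma pentablock_balanced {k : ℕ} (hk : 1 ≤ k) {x : ℂ × ℂ × ℂ} (hx : x ∈ Pentablock)
    {lam : ℂ} (hl : Complex.abs lam ≤ 1) : pentaAct k lam x ∈ Pentablock := by
  obtain ⟨h1, h2⟩ := mem_pentablock_iff.1 hx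
  refine mem_pentablock_iff.2 ⟨symBidisc_balanced h1 hl, ?_⟩
  show Complex.abs (lam ^ k * x.1) < _
  rw [map_mul, map_pow]
  have hg := gP_mono h1 hl
  have hpow : Complex.abs lam ^ k ≤ 1 := pow_le_one₀ (Complex.abs.nonneg lam) hl
  calc Complex.abs lam ^ k * Complex.abs x.1 ≤ 1 * Complex.abs x.1 :=
        mul_le_mul_of_nonneg_right hpow (Complex.abs.nonneg _)
  _ = Complex.abs x.1 := one_mul _
  _ < Complex.abs (gP x.2.1 x.2.2) := h2
  _ ≤ _ := hg

lemma closure_symBidisc_subset : closure SymBidisc ⊆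
    {x : ℂ × ℂ | ∃ z w : ℂ, Complex.abs z ≤ 1 ∧ Complex.abs w ≤ 1 ∧ x = (z + w, z * w)} := by
  have hK : {x : ℂ × ℂ | ∃ z w : ℂ, Complex.abs z ≤ 1 ∧ Complex.abs w ≤ 1 ∧ x = (z + w, z * w)}
      = (fun q : ℂ × ℂ => (q.1 + q.2, q.1 * q.2)) ''
        ((closedBall (0:ℂ) 1) ×ˢ (closedBall (0:ℂ) 1)) := by
    ext x
    simp only [mem_image, mem_prod, mem_closedBall, dist_zero_right, Complex.norm_eq_abs,
      mem_setOf_eq, Prod.exists]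
    constructor
    · rintro ⟨z, w, hz, hw, rfl⟩
      exact ⟨z, w, ⟨hz, hw⟩, rfl⟩
    · rintro ⟨z, w, ⟨hz, hw⟩, h⟩
      exact ⟨z, w, hz, hw, h.symm⟩
  have hcomp : IsCompact ((fun q : ℂ × ℂ => (q.1 + q.2, q.1 * q.2)) ''
      ((closedBall (0:ℂ) 1) ×ˢ (closedBall (0:ℂ) 1))) :=
    ((isCompact_closedBall _ _).prod (isCompact_closedBall _ _)).image
      ((continuous_fst.add continuous_snd).prodMk (continuous_fst.mul continuous_snd))
  rw [hK]
  apply closure_minimal _ hcomp.isClosed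
  rintro ⟨s, p⟩ ⟨z, w, hz, hw, h⟩
  rw [hK] at *
  simp only [mem_image, mem_prod, mem_closedBall, dist_zero_right, Complex.norm_eq_abs,
    Prod.exists]
  refine ⟨z, w, ⟨hz.le, hw.le⟩, ?_⟩
  rw [h]

lemma closure_symBidisc_balanced {s p : ℂ} (h : (s, p) ∈ closure SymBidisc)
    {μ : ℂ} (hμ : Complex.abs μ < 1) : (μ * s, μ ^ 2 * p) ∈ SymBidisc := by
  obtain ⟨z, w, hz, hw, hx⟩ := closure_symBidisc_subset h
  have hs : s = z + w := congrArg Prod.fst hx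
  have hp : p = z * w := congrArg Prod.snd hx
  refine ⟨μ * z, μ * w, ?_, ?_, ?_⟩
  · rw [Complex.norm_eq_abs, map_mul]
    nlinarith [Complex.abs.nonneg μ, Complex.abs.nonneg z]
  · rw [Complex.norm_eq_abs, map_mul]
    nlinarith [Complex.abs.nonneg μ, Complex.abs.nonneg w]
  · rw [hs, hp, Prod.ext_iff]
    exact ⟨by simp; ring, by simp; ring⟩

lemma closure_pentablock_balanced {k : ℕ} (hk : 1 ≤ k) {x : ℂ × ℂ × ℂ}
    (hx : x ∈ closure Pentablock) {μ : ℂ} (hμ : Complex.abs μ < 1) :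
    pentaAct k μ x ∈ Pentablock := by
  have hsp : (x.2.1, x.2.2) ∈ closure SymBidisc := by
    apply map_mem_closure ((continuous_fst.comp continuous_snd).prodMk
      (continuous_snd.comp continuous_snd)) hx
    intro y hy
    exact (mem_pentablock_iff.1 hy).1
  have h1 : (μ * x.2.1, μ ^ 2 * x.2.2) ∈ SymBidisc := closure_symBidisc_balanced hsp hμ
  have hplt : Complex.abs (μ ^ 2 * x.2.2) < 1 := abs_p_lt_one h1
  obtain ⟨u, humem, hulim⟩ := mem_closure_iff_seq_limit.1 hx
  set L : ℂ × ℂ × ℂ → ℂ × ℂ := fun y => (μ * y.2.1, μ ^ 2 * y.2.2) with hLdef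
  set F : ℂ × ℂ → ℝ := fun q => Complex.abs (gP q.1 q.2) with hFdef
  have hLc : Continuous L :=
    (continuous_const.mul (continuous_fst.comp continuous_snd)).prodMk
      (continuous_const.mul (continuous_snd.comp continuous_snd))
  have hq : Filter.Tendsto (fun n => L (u n)) Filter.atTop (nhds (L x)) :=
    (hLc.tendsto x).comp hulim
  have hFc : ContinuousAt F (L x) := by
    apply continuousOn_gP_abs.continuousAt
    apply (isOpen_lt (Complex.continuous_abs.comp continuous_snd) continuous_const).mem_nhds
    exact hplt
  have hlim2 : Filter.Tendsto (fun n => F (L (u n))) Filter.atTop (nhds (F (L x))) :=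
    hFc.tendsto.comp hq
  have hlim1 : Filter.Tendsto (fun n => Complex.abs ((u n).1)) Filter.atTop
      (nhds (Complex.abs x.1)) :=
    ((Complex.continuous_abs.comp continuous_fst).tendsto x).comp hulim
  have hle : ∀ n, Complex.abs ((u n).1) ≤ F (L (u n)) := by
    intro n
    obtain ⟨hn1, hn2⟩ := mem_pentablock_iff.1 (humem n)
    exact le_trans hn2.le (gP_mono hn1 hμ.le)
  have key : Complex.abs x.1 ≤ Complex.abs (gP (μ * x.2.1) (μ ^ 2 * x.2.2)) :=
    le_of_tendsto_of_tendsto' hlim1 hlim2 hle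
  refine mem_pentablock_iff.2 ⟨h1, ?_⟩
  show Complex.abs (μ ^ k * x.1) < _
  rw [map_mul, map_pow]
  have hgpos := (penta_facts h1).1
  rcases eq_or_ne x.1 0 with h0 | h0
  · rw [h0]
    simpa [pentaAct] using hgpos
  · have hx1 : 0 < Complex.abs x.1 := Complex.abs.pos h0
    have hpow : Complex.abs μ ^ k ≤ Complex.abs μ := by
      calc Complex.abs μ ^ k ≤ Complex.abs μ ^ 1 :=
        pow_le_pow_of_le_one (Complex.abs.nonneg μ) hμ.le hk
      _ = Complex.abs μ := pow_one _
    calc Complex.abs μ ^ k * Complex.abs x.1 ≤ Complex.abs μ * Complex.abs x.1 :=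
          mul_le_mul_of_nonneg_right hpow (Complex.abs.nonneg _)
    _ < 1 * Complex.abs x.1 := by nlinarith
    _ = Complex.abs x.1 := one_mul _
    _ ≤ _ := key

lemma zero_mem_pentablock : (0 : ℂ × ℂ × ℂ) ∈ Pentablock := by
  refine mem_pentablock_iff.2 ⟨⟨0, 0, by simp, by simp, by simp⟩, ?_⟩
  have hβ : pentaBeta 0 0 = 0 := by simp [pentaBeta]
  show Complex.abs (0:ℂ) < Complex.abs (gP 0 0)
  rw [gP, hβ]
  simp [Real.sqrt_one]

lemma gauge_set_eq (k : ℕ) (x : ℂ × ℂ × ℂ) :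
    pentaMinkowski k x = sInf {t : ℝ | 0 < t ∧ pentaAct k ((t⁻¹ : ℝ) : ℂ) x ∈ Pentablock} := rfl

lemma continuousAt_act_param (k : ℕ) (x : ℂ × ℂ × ℂ) {c : ℝ} (hc : c ≠ 0) :
    ContinuousAt (fun t : ℝ => pentaAct k ((t⁻¹ : ℝ) : ℂ) x) c := by
  apply ((continuous_pentaAct_param k x).continuousAt).comp
  exact (Complex.continuous_ofReal.continuousAt).comp (continuousAt_inv₀ hc)

lemma gauge_nonempty {k : ℕ} (hk : 1 ≤ k) (x : ℂ × ℂ × ℂ) :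
    {t : ℝ | 0 < t ∧ pentaAct k ((t⁻¹ : ℝ) : ℂ) x ∈ Pentablock}.Nonempty := by
  have h0 : Filter.Tendsto (fun t : ℝ => ((t⁻¹ : ℝ) : ℂ)) Filter.atTop (nhds 0) := by
    have h1 : Filter.Tendsto (fun t : ℝ => t⁻¹) Filter.atTop (nhds 0) :=
      tendsto_inv_atTop_zero
    exact (Complex.continuous_ofReal.tendsto (0:ℝ)).comp h1
  have htend : Filter.Tendsto (fun t : ℝ => pentaAct k ((t⁻¹ : ℝ) : ℂ) x) Filter.atTop
      (nhds 0) := by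
    have h3 := ((continuous_pentaAct_param k x).tendsto 0).comp h0
    rwa [pentaAct_zero hk] at h3
  have hev : {t : ℝ | pentaAct k ((t⁻¹ : ℝ) : ℂ) x ∈ Pentablock} ∈ Filter.atTop := by
    have := htend (isOpen_pentablock.mem_nhds zero_mem_pentablock)
    rwa [Filter.mem_map] at this
  have hev' : ∀ᶠ t : ℝ in Filter.atTop, pentaAct k ((t⁻¹ : ℝ) : ℂ) x ∈ Pentablock := hev
  obtain ⟨t, ht1, ht2⟩ := (hev'.and (Filter.eventually_gt_atTop 0)).exists
  exact ⟨t, ht2, ht1⟩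

lemma gauge_upclosed {k : ℕ} (hk : 1 ≤ k) (x : ℂ × ℂ × ℂ) {t t' : ℝ}
    (ht : t ∈ {t : ℝ | 0 < t ∧ pentaAct k ((t⁻¹ : ℝ) : ℂ) x ∈ Pentablock}) (htt : t ≤ t') :
    t' ∈ {t : ℝ | 0 < t ∧ pentaAct k ((t⁻¹ : ℝ) : ℂ) x ∈ Pentablock} := by
  obtain ⟨ht0, htm⟩ := ht
  have ht'0 : 0 < t' := lt_of_lt_of_le ht0 htt
  refine ⟨ht'0, ?_⟩
  have hcomp : ((t'⁻¹ : ℝ) : ℂ) = (((t / t' : ℝ)) : ℂ) * ((t⁻¹ : ℝ) : ℂ) := by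
    rw [← Complex.ofReal_mul]
    congr 1
    field_simp
  rw [hcomp, pentaAct_mul]
  apply pentablock_balanced hk htm
  rw [Complex.abs_ofReal, abs_of_pos (by positivity)]
  rw [div_le_one ht'0]
  exact htt

lemma minkowski_nonneg (k : ℕ) (x : ℂ × ℂ × ℂ) : 0 ≤ pentaMinkowski k x :=
  Real.sInf_nonneg fun _ ht => ht.1.le

lemma minkowski_lt_iff {k : ℕ} (hk : 1 ≤ k) (x : ℂ × ℂ × ℂ) {c : ℝ} (hc : 0 < c) :
    pentaMinkowski k x < c ↔ pentaAct k ((c⁻¹ : ℝ) : ℂ) x ∈ Pentablock := by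
  constructor
  · intro h
    rw [gauge_set_eq] at h
    obtain ⟨t, ht, htc⟩ := (csInf_lt_iff ⟨0, fun s hs => hs.1.le⟩ (gauge_nonempty hk x)).1 h
    exact (gauge_upclosed hk x ht htc.le).2
  · intro hmem
    have hnb : {t : ℝ | pentaAct k ((t⁻¹ : ℝ) : ℂ) x ∈ Pentablock} ∈ nhds c :=
      (continuousAt_act_param k x (ne_of_gt hc)).preimage_mem_nhds
        (isOpen_pentablock.mem_nhds hmem)
    obtain ⟨ε, hε, hball⟩ := Metric.mem_nhds_iff.1 hnb
    set t : ℝ := max (c / 2) (c - ε / 2) with htdef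
    have ht0 : 0 < t := lt_of_lt_of_le (by linarith) (le_max_left _ _)
    have htc : t < c := by
      apply max_lt (by linarith) (by linarith)
    have htball : t ∈ ball c ε := by
      rw [mem_ball, Real.dist_eq, abs_of_nonpos (by linarith), neg_sub]
      have : c - ε / 2 ≤ t := le_max_right _ _
      linarith
    have htS : t ∈ {t : ℝ | 0 < t ∧ pentaAct k ((t⁻¹ : ℝ) : ℂ) x ∈ Pentablock} :=
      ⟨ht0, hball htball⟩
    calc pentaMinkowski k x ≤ t := csInf_le ⟨0, fun s hs => hs.1.le⟩ htS
    _ < c := htc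

lemma minkowski_le_iff {k : ℕ} (hk : 1 ≤ k) (x : ℂ × ℂ × ℂ) {c : ℝ} (hc : 0 < c) :
    pentaMinkowski k x ≤ c ↔ pentaAct k ((c⁻¹ : ℝ) : ℂ) x ∈ closure Pentablock := by
  constructor
  · intro h
    have hmem : ∀ n : ℕ, pentaAct k (((c + ((n : ℝ) + 1)⁻¹)⁻¹ : ℝ) : ℂ) x ∈ Pentablock := by
      intro n
      have hpos : (0:ℝ) < (n : ℝ) + 1 := by positivity
      apply (minkowski_lt_iff hk x (by positivity)).1
      have : (0:ℝ) < ((n : ℝ) + 1)⁻¹ := by positivity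
      linarith
    have hseq : Filter.Tendsto (fun n : ℕ => c + ((n : ℝ) + 1)⁻¹) Filter.atTop (nhds c) := by
      have h1 : Filter.Tendsto (fun n : ℕ => ((n : ℝ) + 1)⁻¹) Filter.atTop (nhds 0) :=
        tendsto_one_div_add_atTop_nhds_zero_nat.congr (by intro n; rw [one_div])
      have h2 := Filter.Tendsto.add (tendsto_const_nhds (x := c)) h1
      simpa using h2
    have hlim : Filter.Tendsto
        (fun n : ℕ => pentaAct k (((c + ((n : ℝ) + 1)⁻¹)⁻¹ : ℝ) : ℂ) x) Filter.atTop
        (nhds (pentaAct k ((c⁻¹ : ℝ) : ℂ) x)) :=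
      (continuousAt_act_param k x (ne_of_gt hc)).tendsto.comp hseq
    exact mem_closure_of_tendsto hlim (Filter.Eventually.of_forall hmem)
  · intro hcl
    by_contra hcon
    push_neg at hcon
    obtain ⟨t, htc, hth⟩ := exists_between hcon
    have ht0 : 0 < t := lt_trans hc htc
    have htS : t ∈ {t : ℝ | 0 < t ∧ pentaAct k ((t⁻¹ : ℝ) : ℂ) x ∈ Pentablock} := by
      refine ⟨ht0, ?_⟩
      have hcomp : ((t⁻¹ : ℝ) : ℂ) = (((c / t : ℝ)) : ℂ) * ((c⁻¹ : ℝ) : ℂ) := by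
        rw [← Complex.ofReal_mul]
        congr 1
        field_simp
      rw [hcomp, pentaAct_mul]
      apply closure_pentablock_balanced hk hcl
      rw [Complex.abs_ofReal, abs_of_pos (by positivity)]
      rw [div_lt_one ht0]
      exact htc
    have := csInf_le ⟨0, fun s hs => hs.1.le⟩ htS
    rw [gauge_set_eq] at hth
    linarith

lemma memP_bound {y : ℂ × ℂ × ℂ} (hy : y ∈ Pentablock) :
    Complex.abs y.1 < 2 ∧ Complex.abs y.2.1 < 2 ∧ Complex.abs y.2.2 < 1 := by
  obtain ⟨h1, h2⟩ := mem_pentablock_iff.1 hy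
  obtain ⟨-, hg2, hs2, -, -⟩ := penta_facts h1
  exact ⟨lt_trans h2 hg2, hs2, abs_p_lt_one h1⟩

lemma minkowski_zero (k : ℕ) : pentaMinkowski k 0 = 0 := by
  rw [gauge_set_eq]
  have hset : {t : ℝ | 0 < t ∧ pentaAct k ((t⁻¹ : ℝ) : ℂ) 0 ∈ Pentablock} = Ioi 0 := by
    ext t
    constructor
    · exact fun h => h.1
    · intro h
      refine ⟨h, ?_⟩
      rw [pentaAct_zero']
      exact zero_mem_pentablock
  rw [hset]
  exact csInf_Ioi

lemma minkowski_pos {k : ℕ} (hk : 1 ≤ k) {x : ℂ × ℂ × ℂ} (hx : x ≠ 0) :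
    0 < pentaMinkowski k x := by
  have hcases : x.1 ≠ 0 ∨ x.2.1 ≠ 0 ∨ x.2.2 ≠ 0 := by
    by_contra hcon
    push_neg at hcon
    apply hx
    obtain ⟨h1, h2, h3⟩ := hcon
    ext
    · exact h1
    · exact h2
    · exact h3
  have hbound : ∀ t ∈ {t : ℝ | 0 < t ∧ pentaAct k ((t⁻¹ : ℝ) : ℂ) x ∈ Pentablock},
      (Complex.abs x.2.1 / 2) ≤ t ∧ Real.sqrt (Complex.abs x.2.2) ≤ t ∧
      min 1 (Complex.abs x.1 / 2) ≤ t := by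
    rintro t ⟨ht0, htm⟩
    have hti : (0:ℝ) < t⁻¹ := by positivity
    obtain ⟨hb1, hb2, hb3⟩ := memP_bound htm
    have ha1 : Complex.abs (pentaAct k ((t⁻¹ : ℝ) : ℂ) x).1 = t⁻¹ ^ k * Complex.abs x.1 := by
      show Complex.abs (((t⁻¹ : ℝ) : ℂ) ^ k * x.1) = _
      rw [map_mul, map_pow, Complex.abs_ofReal, abs_of_pos hti]
    have ha2 : Complex.abs (pentaAct k ((t⁻¹ : ℝ) : ℂ) x).2.1 = t⁻¹ * Complex.abs x.2.1 := by
      show Complex.abs (((t⁻¹ : ℝ) : ℂ) * x.2.1) = _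
      rw [map_mul, Complex.abs_ofReal, abs_of_pos hti]
    have ha3 : Complex.abs (pentaAct k ((t⁻¹ : ℝ) : ℂ) x).2.2
        = t⁻¹ ^ 2 * Complex.abs x.2.2 := by
      show Complex.abs (((t⁻¹ : ℝ) : ℂ) ^ 2 * x.2.2) = _
      rw [map_mul, map_pow, Complex.abs_ofReal, abs_of_pos hti]
    rw [ha1] at hb1
    rw [ha2] at hb2
    rw [ha3] at hb3
    have htinv : t⁻¹ * t = 1 := inv_mul_cancel₀ (ne_of_gt ht0)
    refine ⟨?_, ?_, ?_⟩
    · nlinarith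
    · have hsq : Complex.abs x.2.2 ≤ t ^ 2 := by nlinarith
      calc Real.sqrt (Complex.abs x.2.2) ≤ Real.sqrt (t ^ 2) := Real.sqrt_le_sqrt hsq
      _ = t := by rw [Real.sqrt_sq ht0.le]
    · rcases le_or_gt 1 t with h1t | h1t
      · exact le_trans (min_le_left _ _) h1t
      · have hinv1 : (1:ℝ) ≤ t⁻¹ := by
          rw [le_inv_comm₀ one_pos ht0]
          simpa using h1t.le
        have hpw : t⁻¹ ≤ t⁻¹ ^ k := le_self_pow₀ hinv1 (by omega)
        have : t⁻¹ * Complex.abs x.1 < 2 := by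
          calc t⁻¹ * Complex.abs x.1 ≤ t⁻¹ ^ k * Complex.abs x.1 :=
              mul_le_mul_of_nonneg_right hpw (Complex.abs.nonneg _)
          _ < 2 := hb1
        have : Complex.abs x.1 / 2 ≤ t := by nlinarith
        exact le_trans (min_le_right _ _) this
  rw [gauge_set_eq]
  rcases hcases with h | h | h
  · have hε : (0:ℝ) < min 1 (Complex.abs x.1 / 2) :=
      lt_min one_pos (half_pos (Complex.abs.pos h))
    exact lt_of_lt_of_le hε (le_csInf (gauge_nonempty hk x) fun t ht => (hbound t ht).2.2)
  · have hε : (0:ℝ) < Complex.abs x.2.1 / 2 := half_pos (Complex.abs.pos h)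
    exact lt_of_lt_of_le hε (le_csInf (gauge_nonempty hk x) fun t ht => (hbound t ht).1)
  · have hε : (0:ℝ) < Real.sqrt (Complex.abs x.2.2) :=
      Real.sqrt_pos.2 (Complex.abs.pos h)
    exact lt_of_lt_of_le hε (le_csInf (gauge_nonempty hk x) fun t ht => (hbound t ht).2.1)


/-- For `m = (k,1,2)` with `k ≥ 1`, the boundary of the pentablock is contained in
`{𝔥_𝒫 = 1}`; consequently `𝔥_𝒫` is continuous. -/
theorem pentablock_minkowski_continuous (k : ℕ) (hk : 1 ≤ k) :
    (frontier Pentablock ⊆ {x : ℂ × ℂ × ℂ | pentaMinkowski k x = 1}) ∧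
    Continuous (pentaMinkowski k) := by
  have hact1 : ∀ x : ℂ × ℂ × ℂ, pentaAct k (((1:ℝ)⁻¹ : ℝ) : ℂ) x = x := by
    intro x
    rw [inv_one, Complex.ofReal_one, pentaAct_one]
  constructor
  · intro x hx
    rw [isOpen_pentablock.frontier_eq] at hx
    obtain ⟨hxc, hxn⟩ := hx
    have hle1 : pentaMinkowski k x ≤ 1 := by
      rw [minkowski_le_iff hk x one_pos, hact1]
      exact hxc
    have hge1 : ¬ pentaMinkowski k x < 1 := by
      intro h
      have := (minkowski_lt_iff hk x one_pos).1 h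
      rw [hact1] at this
      exact hxn this
    have : pentaMinkowski k x = 1 := le_antisymm hle1 (not_lt.1 hge1)
    exact this
  · rw [continuous_iff_lower_upperSemicontinuous]
    constructor
    · rw [lowerSemicontinuous_iff_isOpen_preimage]
      intro c
      rcases lt_trichotomy c 0 with hc | hc | hc
      · have hset : pentaMinkowski k ⁻¹' Ioi c = univ := by
          apply eq_univ_iff_forall.2
          intro x
          exact lt_of_lt_of_le hc (minkowski_nonneg k x)
        rw [hset]
        exact isOpen_univ
      · subst hc
        have hset : pentaMinkowski k ⁻¹' Ioi 0 = {(0 : ℂ × ℂ × ℂ)}ᶜ := by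
          ext x
          simp only [mem_preimage, mem_Ioi, mem_compl_iff, mem_singleton_iff]
          constructor
          · intro h h0
            rw [h0, minkowski_zero] at h
            exact lt_irrefl 0 h
          · intro h
            exact minkowski_pos hk h
        rw [hset]
        exact isOpen_compl_singleton
      · have hset : pentaMinkowski k ⁻¹' Ioi c
            = (fun x => pentaAct k ((c⁻¹ : ℝ) : ℂ) x) ⁻¹' (closure Pentablock)ᶜ := by
          ext x
          simp only [mem_preimage, mem_Ioi, mem_compl_iff]
          rw [← not_le, ← minkowski_le_iff hk x hc]
        rw [hset]
        exact isClosed_closure.isOpen_compl.preimage (continuous_pentaAct k _)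
    · rw [upperSemicontinuous_iff_isOpen_preimage]
      intro c
      rcases le_or_gt c 0 with hc | hc
      · have hset : pentaMinkowski k ⁻¹' Iio c = ∅ := by
          apply eq_empty_iff_forall_notMem.2
          intro x hmem
          have := minkowski_nonneg k x
          have : c ≤ pentaMinkowski k x := le_trans hc this
          exact absurd hmem (by simp [mem_preimage, mem_Iio, not_lt.2 this])
        rw [hset]
        exact isOpen_empty
      · have hset : pentaMinkowski k ⁻¹' Iio c
            = (fun x => pentaAct k ((c⁻¹ : ℝ) : ℂ) x) ⁻¹' Pentablock := by
          ext x
          simp only [mem_preimage, mem_Iio]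
          exact minkowski_lt_iff hk x hc
        rw [hset]
        exact isOpen_pentablock.preimage (continuous_pentaAct k _)
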